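/- arXiv:math/0606104 — 4 statements merged into one kernel-verified Lean document; each statement's English description precedes it below -/
import Mathlib

section
/- The f-vector of a finite multicomplex M satisfies f(M) = Σ_{p² ∈ M} S^{2·deg(p)} f(M^{(p²)}), where S is the shift operator S(f_0,f_1,f_2,…) = (0,f_0,f_1,…) and f_i(M) = #M_i. -/
open Finsupp

/-- A monomial in variables `x_1 < ⋯ < x_n`, given by its exponent vector. -/
abbrev Mon (n : ℕ) := Fin n → ℕ

/-- Total degree of a monomial. -/
def tdeg {n : ℕ} (m : Mon n) : ℕ := ∑ i, m i

/-- Divisibility of monomials. -/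
def mdvd {n : ℕ} (m t : Mon n) : Prop := ∀ i, m i ≤ t i

/-- A multicomplex: a finite set of monomials closed under taking divisors. -/
def IsMulticomplex {n : ℕ} (M : Finset (Mon n)) : Prop :=
  ∀ m t : Mon n, mdvd m t → t ∈ M → m ∈ M

/-- Square-free monomials. -/
def SqFree {n : ℕ} (m : Mon n) : Prop := ∀ i, m i ≤ 1

def decr {n : ℕ} (m : Mon n) (j : Fin n) : Mon n := Function.update m j (m j - 1)
def incr {n : ℕ} (m : Mon n) (j : Fin n) : Mon n := Function.update m j (m j + 1)
def unitMon {n : ℕ} (i : Fin n) : Mon n := fun j => if j = i then 1 else 0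
/-- Sum of the exponents of the variables preceding `j`. -/
def presum {n : ℕ} (m : Mon n) (j : Fin n) : ℕ := ∑ i ∈ Finset.univ.filter (· < j), m i
/-- Multiplication by the square `p²`. -/
def mulSq {n : ℕ} (p m : Mon n) : Mon n := fun i => 2 * p i + m i

/-- The Björner–Vrećica boundary operator on `ℤ[X]`. -/
noncomputable def bdry (n : ℕ) : (Mon n →₀ ℤ) →ₗ[ℤ] (Mon n →₀ ℤ) :=
  Finsupp.lsum ℤ fun m => LinearMap.toSpanSingleton ℤ _
    (∑ j, (((-1 : ℤ) ^ presum m j) * ((m j % 2 : ℕ) : ℤ)) • Finsupp.single (decr m j) (1 : ℤ))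

/-- The Björner–Vrećica boundary operator, with real coefficients. -/
noncomputable def bdryR (n : ℕ) : (Mon n →₀ ℝ) →ₗ[ℝ] (Mon n →₀ ℝ) :=
  Finsupp.lsum ℝ fun m => LinearMap.toSpanSingleton ℝ _
    (∑ j, (((-1 : ℝ) ^ presum m j) * ((m j % 2 : ℕ) : ℝ)) • Finsupp.single (decr m j) (1 : ℝ))

/-- The dual boundary operator `∂*` of the multicomplex `M`. -/
noncomputable def upL {n : ℕ} (M : Finset (Mon n)) : (Mon n →₀ ℝ) →ₗ[ℝ] (Mon n →₀ ℝ) :=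
  Finsupp.lsum ℝ fun m => LinearMap.toSpanSingleton ℝ _
    (∑ j, (if m j % 2 = 0 ∧ incr m j ∈ M then ((-1 : ℝ) ^ presum m j) else 0) •
      Finsupp.single (incr m j) (1 : ℝ))

/-- Inner product making the monomials an orthonormal basis. -/
noncomputable def dot {n : ℕ} (f g : Mon n →₀ ℝ) : ℝ := ∑ m ∈ f.support, f m * g m

/-- Degree-`d` part of `M`. -/
def Mdeg {n : ℕ} (M : Finset (Mon n)) (d : ℕ) : Finset (Mon n) :=
  M.filter fun m => tdeg m = d

/-- `ℝM_d`, the span of the degree-`d` monomials of `M`. -/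
noncomputable def Vdeg {n : ℕ} (M : Finset (Mon n)) (d : ℕ) : Submodule ℝ (Mon n →₀ ℝ) :=
  Submodule.span ℝ ((fun m => Finsupp.single m (1 : ℝ)) '' ↑(Mdeg M d))

/-- The simplicial complex `M^{(p²)} = {q squarefree : p²q ∈ M}`. -/
def Mp2 {n : ℕ} (M : Finset (Mon n)) (p : Mon n) : Finset (Mon n) :=
  M.filter fun q => (∀ i, q i ≤ 1) ∧ mulSq p q ∈ M

/-- The set of monomials `p` with `p² ∈ M`. -/
def sqrts {n : ℕ} (M : Finset (Mon n)) : Finset (Mon n) :=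
  (M.filter fun m => ∀ i, m i % 2 = 0).image fun m i => m i / 2

/-- Laplacian `L' = ∂∂*` of the multicomplex `M`. -/
noncomputable def lapUp {n : ℕ} (M : Finset (Mon n)) : (Mon n →₀ ℝ) →ₗ[ℝ] (Mon n →₀ ℝ) :=
  bdryR n ∘ₗ upL M

/-- Laplacian `L'' = ∂*∂` of the multicomplex `M`. -/
noncomputable def lapDown {n : ℕ} (M : Finset (Mon n)) : (Mon n →₀ ℝ) →ₗ[ℝ] (Mon n →₀ ℝ) :=
  upL M ∘ₗ bdryR n

/-- Multiplicity of `μ` as an eigenvalue of an operator `T` on `ℝM_d`. -/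
noncomputable def multOf {n : ℕ} (M : Finset (Mon n)) (d : ℕ)
    (T : (Mon n →₀ ℝ) →ₗ[ℝ] (Mon n →₀ ℝ)) (μ : ℝ) : ℕ :=
  Module.finrank ℝ ↥(LinearMap.ker (T - μ • LinearMap.id) ⊓ Vdeg M d)

/-- Multiplicity of `μ` in the spectrum `s'_d` of `L'_d`. -/
noncomputable def multL' {n : ℕ} (M : Finset (Mon n)) (d : ℕ) (μ : ℝ) : ℕ :=
  multOf M d (lapUp M) μ

/-- Multiplicity of `μ` in the spectrum `s''_d` of `L''_d`. -/
noncomputable def multL'' {n : ℕ} (M : Finset (Mon n)) (d : ℕ) (μ : ℝ) : ℕ :=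
  multOf M d (lapDown M) μ

/-- Multiplicity of `μ` in the spectrum `s^{tot}_d` of `L_d = L'_d + L''_d`. -/
noncomputable def multL {n : ℕ} (M : Finset (Mon n)) (d : ℕ) (μ : ℝ) : ℕ :=
  multOf M d (lapUp M + lapDown M) μ

/-- Shifted multicomplex (relative to its support). -/
def Shifted {n : ℕ} (N : Finset (Mon n)) : Prop :=
  ∀ (m : Mon n) (i j : Fin n), i < j → incr m j ∈ N → unitMon i ∈ N → incr m i ∈ N

/-- Shifted simplicial complex (relative to its support). -/
def ShiftedSimp {n : ℕ} (N : Finset (Mon n)) : Prop :=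
  ∀ (m : Mon n) (i j : Fin n), i < j → incr m j ∈ N → unitMon i ∈ N → m i = 0 →
    incr m i ∈ N

/-- `d_j`: the number of monomials of degree `k` in `N` divisible by `x_j`. -/
def dseq {n : ℕ} (N : Finset (Mon n)) (k : ℕ) (j : Fin n) : ℕ :=
  ((Mdeg N k).filter fun m => 1 ≤ m j).card

/-- The `j`-th entry of the conjugate partition `d_k^T(N)`. -/
def dconj {n : ℕ} (N : Finset (Mon n)) (k : ℕ) (j : ℕ) : ℕ :=
  (Finset.univ.filter fun i : Fin n => j ≤ dseq N k i).card

lemma tdeg_mulSq {n : ℕ} (p q : Mon n) : tdeg (mulSq p q) = 2 * tdeg p + tdeg q := by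
  simp [tdeg, mulSq, Finset.sum_add_distrib, Finset.mul_sum]

lemma mem_sqrts_of {n : ℕ} {M : Finset (Mon n)} (p : Mon n) (h : (fun i => 2 * p i) ∈ M) :
    p ∈ sqrts M := by
  refine Finset.mem_image.2 ⟨fun i => 2 * p i, Finset.mem_filter.2
    ⟨h, fun i => show 2 * p i % 2 = 0 by omega⟩, ?_⟩
  funext i; show 2 * p i / 2 = p i; omega

/-- `f(M) = Σ_{p² ∈ M} S^{2·deg p} f(M^{(p²)})`. -/
theorem fvector_decomposition {n : ℕ} (M : Finset (Mon n))
    (hM : IsMulticomplex M) :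
    ∀ i : ℕ, (Mdeg M i).card =
      ∑ p ∈ sqrts M,
        if 2 * tdeg p ≤ i then (Mdeg (Mp2 M p) (i - 2 * tdeg p)).card else 0 := by
  intro i
  have key : (Mdeg M i).card =
      ((sqrts M).sigma fun p =>
        if 2 * tdeg p ≤ i then Mdeg (Mp2 M p) (i - 2 * tdeg p) else ∅).card := by
    refine Finset.card_bij' (fun m _ => ⟨fun j => m j / 2, fun j => m j % 2⟩)
      (fun pq _ => mulSq pq.1 pq.2) ?_ ?_ ?_ ?_
    · intro m hm
      obtain ⟨hmM, hdeg⟩ := Finset.mem_filter.1 hm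
      set p : Mon n := fun j => m j / 2 with hp
      set q : Mon n := fun j => m j % 2 with hq
      have hmeq : mulSq p q = m := by
        funext j; show 2 * (m j / 2) + m j % 2 = m j; omega
      have h2p : (fun j => 2 * p j) ∈ M :=
        hM (fun j => 2 * p j) m (fun j => show 2 * (m j / 2) ≤ m j by omega) hmM
      have hqM : q ∈ M := hM q m (fun j => show m j % 2 ≤ m j by omega) hmM
      have hps : p ∈ sqrts M := mem_sqrts_of p h2p
      have htd : tdeg m = 2 * tdeg p + tdeg q := by rw [← hmeq, tdeg_mulSq]
      have hle : 2 * tdeg p ≤ i := by omega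
      refine Finset.mem_sigma.2 ⟨hps, ?_⟩
      rw [if_pos hle]
      show q ∈ Mdeg (Mp2 M p) (i - 2 * tdeg p)
      refine Finset.mem_filter.2 ⟨Finset.mem_filter.2 ⟨hqM, ?_, by rwa [hmeq]⟩, by omega⟩
      intro j; show m j % 2 ≤ 1; omega
    · intro pq hpq
      obtain ⟨hps, hq⟩ := Finset.mem_sigma.1 hpq
      by_cases hle : 2 * tdeg pq.1 ≤ i
      · rw [if_pos hle] at hq
        obtain ⟨hQ, hdeg⟩ := Finset.mem_filter.1 hq
        obtain ⟨_, _, hmem⟩ := Finset.mem_filter.1 hQ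
        exact Finset.mem_filter.2 ⟨hmem, by rw [tdeg_mulSq]; omega⟩
      · rw [if_neg hle] at hq; exact absurd hq (Finset.notMem_empty _)
    · intro m hm
      funext j
      show 2 * (m j / 2) + m j % 2 = m j
      omega
    · intro pq hpq
      obtain ⟨hps, hq⟩ := Finset.mem_sigma.1 hpq
      by_cases hle : 2 * tdeg pq.1 ≤ i
      · rw [if_pos hle] at hq
        obtain ⟨hQ, _⟩ := Finset.mem_filter.1 hq
        obtain ⟨_, hsf, _⟩ := Finset.mem_filter.1 hQ
        obtain ⟨p, q⟩ := pq
        have h1 : (fun j => mulSq p q j / 2) = p := by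
          funext j; show (2 * p j + q j) / 2 = p j; have h : q j ≤ 1 := hsf j; omega
        have h2 : (fun j => mulSq p q j % 2) = q := by
          funext j; show (2 * p j + q j) % 2 = q j; have h : q j ≤ 1 := hsf j; omega
        show (⟨fun j => mulSq p q j / 2, fun j => mulSq p q j % 2⟩ :
          Σ _ : Mon n, Mon n) = ⟨p, q⟩
        rw [h1, h2]
      · rw [if_neg hle] at hq; exact absurd hq (Finset.notMem_empty _)
  rw [key, Finset.card_sigma]
  refine Finset.sum_congr rfl fun p _ => ?_
  split <;> simp_all
end

section
/- The Björner–Vrećica boundary operator satisfies ∂(p²q) = p²·∂(q) for all monomials p and q (q square-free, p²q in the multicomplex); consequently, the restriction of ∂ to p²·ℤM^{(p²)} coincides (after dividing by p²) with the usual simplicial boundary operator on the simplicial complex M^{(p²)}. -/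
open Finsupp

lemma bdry_single {n : ℕ} (m : Mon n) :
    bdry n (Finsupp.single m 1) =
      ∑ j, (((-1 : ℤ) ^ presum m j) * ((m j % 2 : ℕ) : ℤ)) •
        Finsupp.single (decr m j) (1 : ℤ) := by
  simp [bdry, Finsupp.lsum_single, LinearMap.toSpanSingleton_apply]

/-- `∂(p²q) = p²·∂(q)`, and on square-free monomials `∂` is the
usual simplicial boundary operator. -/
theorem boundary_mulSq {n : ℕ} (p q : Mon n) (hq : SqFree q) :
    bdry n (Finsupp.single (mulSq p q) 1) =
      Finsupp.mapDomain (mulSq p) (bdry n (Finsupp.single q 1)) ∧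
    bdry n (Finsupp.single q 1) =
      ∑ j ∈ Finset.univ.filter (fun j => q j = 1),
        ((-1 : ℤ) ^ presum q j) • Finsupp.single (Function.update q j 0) (1 : ℤ) := by
  constructor
  · rw [bdry_single, bdry_single, Finsupp.mapDomain_finset_sum]
    refine Finset.sum_congr rfl fun j _ => ?_
    rw [Finsupp.mapDomain_smul, Finsupp.mapDomain_single]
    have h2 : mulSq p q j % 2 = q j % 2 := by
      simp [mulSq, Nat.mul_add_mod]
    have hs : (-1 : ℤ) ^ presum (mulSq p q) j = (-1 : ℤ) ^ presum q j := by
      have : presum (mulSq p q) j =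
          2 * (∑ i ∈ Finset.univ.filter (· < j), p i) + presum q j := by
        simp [presum, mulSq, Finset.sum_add_distrib, Finset.mul_sum]
      rw [this, pow_add, pow_mul]
      simp
    rw [h2, hs]
    rcases Nat.le_one_iff_eq_zero_or_eq_one.mp (hq j) with h | h
    · simp [h]
    · have hd : decr (mulSq p q) j = mulSq p (decr q j) := by
        funext i
        by_cases hij : i = j
        · subst hij; simp [decr, mulSq, h]
        · simp [decr, mulSq, Function.update, hij]
      rw [hd]
  · rw [bdry_single, Finset.sum_filter]
    refine Finset.sum_congr rfl fun j _ => ?_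
    rcases Nat.le_one_iff_eq_zero_or_eq_one.mp (hq j) with h | h
    · simp [h]
    · have hd : decr q j = Function.update q j 0 := by
        simp [decr, h]
      simp [h, hd]
end

section
/- The Laplacian operators of a multicomplex commute with multiplication by p²: L'(p²q) = p²L'(q), L''(p²q) = p²L''(q), and L(p²q) = p²L(q), for q square-free with p²q ∈ M. -/
open Finsupp

/-! `∂` lowers an odd exponent and `∂*` raises an even one, with sign `(-1) ^ presum m j`.
Multiplying by `p²` changes neither the parities of the exponents nor these signs, and for
square-free `q` the monomial `x_j q` lies in `M^{(p²)}` exactly when `p² x_j q` lies in `M`.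
So `∂` commutes with `p²` everywhere and `∂*` on square-free monomials; since `∂` keeps
square-free monomials square-free, both composites `∂∂*` and `∂*∂` commute with `p²`. -/

section MapDomain

variable {R α β : Type*} [CommSemiring R]

theorem mapDomain_comm_of_single {T : (β →₀ R) →ₗ[R] (β →₀ R)} {S : (α →₀ R) →ₗ[R] (α →₀ R)}
    {g : α → β} {s : Set α}
    (hTS : ∀ m ∈ s, T (single (g m) 1) = mapDomain g (S (single m 1)))
    {f : α →₀ R} (hf : ↑f.support ⊆ s) :
    T (mapDomain g f) = mapDomain g (S f) := by
  have hspan : f ∈ Submodule.span R ((fun m => single m (1 : R)) '' s) := by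
    rw [← supported_eq_span_single]
    exact (mem_supported R f).mpr hf
  refine LinearMap.eqOn_span (f := T ∘ₗ lmapDomain R R g) (g := lmapDomain R R g ∘ₗ S)
    ?_ hspan
  rintro _ ⟨m, hm, rfl⟩
  simpa using hTS m hm

end MapDomain

section Monomials

variable {n : ℕ}

theorem sqFree_decr {m : Mon n} (hm : SqFree m) (j : Fin n) : SqFree (decr m j) := by
  intro i
  rcases eq_or_ne i j with rfl | hij
  · simp only [decr, Function.update_self]
    have := hm i
    omega
  · simpa only [decr, Function.update_of_ne hij] using hm i

theorem mulSq_mod_two (p m : Mon n) (j : Fin n) : mulSq p m j % 2 = m j % 2 := by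
  simp [mulSq]

theorem neg_one_pow_presum_mulSq (p m : Mon n) (j : Fin n) :
    (-1 : ℝ) ^ presum (mulSq p m) j = (-1 : ℝ) ^ presum m j := by
  have : presum (mulSq p m) j = 2 * presum p j + presum m j := by
    simp [presum, mulSq, Finset.sum_add_distrib, Finset.mul_sum]
  rw [this, pow_add, pow_mul]
  norm_num

theorem incr_mulSq (p m : Mon n) (j : Fin n) : incr (mulSq p m) j = mulSq p (incr m j) := by
  funext i
  rcases eq_or_ne i j with rfl | hij
  · simp only [incr, mulSq, Function.update_self]
    ring
  · simp only [incr, mulSq, Function.update_of_ne hij]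

theorem decr_mulSq (p m : Mon n) {j : Fin n} (hm : 1 ≤ m j) :
    decr (mulSq p m) j = mulSq p (decr m j) := by
  funext i
  rcases eq_or_ne i j with rfl | hij
  · simp only [decr, mulSq, Function.update_self]
    omega
  · simp only [decr, mulSq, Function.update_of_ne hij]

theorem incr_mem_Mp2_iff {M : Finset (Mon n)} (hM : IsMulticomplex M) (p : Mon n) {m : Mon n}
    (hm : SqFree m) {j : Fin n} (hj : m j = 0) :
    incr m j ∈ Mp2 M p ↔ mulSq p (incr m j) ∈ M := by
  refine ⟨fun h => (Finset.mem_filter.mp h).2.2, fun h => ?_⟩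
  refine Finset.mem_filter.mpr ⟨hM _ _ (fun i => by simp [mulSq]) h, fun i => ?_, h⟩
  rcases eq_or_ne i j with rfl | hij
  · simp [incr, hj]
  · simpa only [incr, Function.update_of_ne hij] using hm i

end Monomials

section Operators

variable {n : ℕ}

theorem bdryR_single (m : Mon n) :
    bdryR n (single m 1) =
      ∑ j, ((-1 : ℝ) ^ presum m j * ((m j % 2 : ℕ) : ℝ)) • single (decr m j) (1 : ℝ) := by
  simp [bdryR]

theorem upL_single (M : Finset (Mon n)) (m : Mon n) :
    upL M (single m 1) =
      ∑ j, (if m j % 2 = 0 ∧ incr m j ∈ M then (-1 : ℝ) ^ presum m j else 0) •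
        single (incr m j) (1 : ℝ) := by
  simp [upL]

theorem bdryR_single_mulSq (p m : Mon n) :
    bdryR n (single (mulSq p m) 1) = mapDomain (mulSq p) (bdryR n (single m 1)) := by
  rw [bdryR_single, bdryR_single, mapDomain_finsetSum]
  refine Finset.sum_congr rfl fun j _ => ?_
  rw [mapDomain_smul, mapDomain_single, mulSq_mod_two, neg_one_pow_presum_mulSq]
  rcases Nat.eq_zero_or_pos (m j) with h0 | hpos
  · simp [h0]
  · rw [decr_mulSq p m hpos]

theorem bdryR_mapDomain_mulSq (p : Mon n) (f : Mon n →₀ ℝ) :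
    bdryR n (mapDomain (mulSq p) f) = mapDomain (mulSq p) (bdryR n f) :=
  mapDomain_comm_of_single (s := Set.univ) (fun m _ => bdryR_single_mulSq p m)
    (Set.subset_univ _)

theorem sqFree_of_mem_support_bdryR {q m : Mon n} (hq : SqFree q)
    (hm : m ∈ (bdryR n (single q 1)).support) : SqFree m := by
  rw [bdryR_single] at hm
  obtain ⟨j, -, hj⟩ := Finset.mem_biUnion.mp (support_finsetSum hm)
  rw [Finset.mem_singleton.mp (support_single_subset (support_smul hj))]
  exact sqFree_decr hq j

theorem upL_single_mulSq {M : Finset (Mon n)} (hM : IsMulticomplex M) (p : Mon n) {m : Mon n}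
    (hm : SqFree m) :
    upL M (single (mulSq p m) 1) = mapDomain (mulSq p) (upL (Mp2 M p) (single m 1)) := by
  rw [upL_single, upL_single, mapDomain_finsetSum]
  refine Finset.sum_congr rfl fun j _ => ?_
  rw [mapDomain_smul, mapDomain_single, incr_mulSq, mulSq_mod_two, neg_one_pow_presum_mulSq]
  by_cases heven : m j % 2 = 0
  · have hj : m j = 0 := by
      have := hm j
      omega
    simp only [heven, true_and, incr_mem_Mp2_iff hM p hm hj]
  · simp only [heven, false_and, if_false]

theorem upL_mapDomain_mulSq {M : Finset (Mon n)} (hM : IsMulticomplex M) (p : Mon n)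
    {f : Mon n →₀ ℝ} (hf : ∀ m ∈ f.support, SqFree m) :
    upL M (mapDomain (mulSq p) f) = mapDomain (mulSq p) (upL (Mp2 M p) f) :=
  mapDomain_comm_of_single (s := {m | SqFree m}) (fun _ hm => upL_single_mulSq hM p hm) hf

end Operators

theorem laplacian_mulSq_general {n : ℕ} (M : Finset (Mon n)) (hM : IsMulticomplex M)
    (p q : Mon n) (hq : SqFree q) :
    lapUp M (Finsupp.single (mulSq p q) 1) =
      Finsupp.mapDomain (mulSq p) (lapUp (Mp2 M p) (Finsupp.single q 1)) ∧
    lapDown M (Finsupp.single (mulSq p q) 1) =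
      Finsupp.mapDomain (mulSq p) (lapDown (Mp2 M p) (Finsupp.single q 1)) ∧
    (lapUp M + lapDown M) (Finsupp.single (mulSq p q) 1) =
      Finsupp.mapDomain (mulSq p)
        ((lapUp (Mp2 M p) + lapDown (Mp2 M p)) (Finsupp.single q 1)) := by
  have hUp : lapUp M (single (mulSq p q) 1) =
      mapDomain (mulSq p) (lapUp (Mp2 M p) (single q 1)) := by
    rw [lapUp, lapUp, LinearMap.comp_apply, LinearMap.comp_apply, upL_single_mulSq hM p hq,
      bdryR_mapDomain_mulSq]
  have hDown : lapDown M (single (mulSq p q) 1) =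
      mapDomain (mulSq p) (lapDown (Mp2 M p) (single q 1)) := by
    rw [lapDown, lapDown, LinearMap.comp_apply, LinearMap.comp_apply, bdryR_single_mulSq,
      upL_mapDomain_mulSq hM p fun _ hm => sqFree_of_mem_support_bdryR hq hm]
  exact ⟨hUp, hDown, by simp only [LinearMap.add_apply, mapDomain_add, hUp, hDown]⟩

/-- the Laplacians commute with multiplication by `p²`:
`L'(p²q) = p²L'(q)`, `L''(p²q) = p²L''(q)`, `L(p²q) = p²L(q)`, where on the
right-hand side the Laplacian of the simplicial complex `M^{(p²)}` is used. -/
theorem laplacian_mulSq {n : ℕ} (M : Finset (Mon n)) (hM : IsMulticomplex M)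
    (p q : Mon n) (hq : SqFree q) (h : mulSq p q ∈ M) :
    lapUp M (Finsupp.single (mulSq p q) 1) =
      Finsupp.mapDomain (mulSq p) (lapUp (Mp2 M p) (Finsupp.single q 1)) ∧
    lapDown M (Finsupp.single (mulSq p q) 1) =
      Finsupp.mapDomain (mulSq p) (lapDown (Mp2 M p) (Finsupp.single q 1)) ∧
    (lapUp M + lapDown M) (Finsupp.single (mulSq p q) 1) =
      Finsupp.mapDomain (mulSq p)
        ((lapUp (Mp2 M p) + lapDown (Mp2 M p)) (Finsupp.single q 1)) :=
  laplacian_mulSq_general M hM p q hq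
end

section
/- If M is a shifted multicomplex, then for every p with p² ∈ M, the simplicial complex M^{(p²)} is shifted with respect to the induced total ordering on the vertices in its support. -/
open Finsupp

/-- if `M` is shifted, then each `M^{(p²)}` is a shifted
simplicial complex (w.r.t. the induced ordering on its support). -/
theorem Mp2_shifted {n : ℕ} (M : Finset (Mon n)) (hM : IsMulticomplex M)
    (hS : Shifted M) (p : Mon n) (hp : mulSq p 0 ∈ M) :
    ShiftedSimp (Mp2 M p) := by
  have key : ∀ (q : Mon n) (k : Fin n), mulSq p (incr q k) = incr (mulSq p q) k := by
    intro q k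
    funext l
    simp only [mulSq, incr, Function.update_apply]
    split <;> simp_all <;> omega
  intro m i j hij hj hi hmi
  simp only [Mp2, Finset.mem_filter] at hj hi ⊢
  obtain ⟨hjM, hjsf, hjsq⟩ := hj
  obtain ⟨hiM, -, -⟩ := hi
  refine ⟨hS m i j hij hjM hiM, ?_, ?_⟩
  · intro k
    rcases eq_or_ne k i with rfl | hk
    · simp [incr, Function.update_apply, hmi]
    · have := hjsf k
      simp only [incr, Function.update_apply] at this ⊢
      rw [if_neg hk]
      rcases eq_or_ne k j with rfl | hkj
      · rw [if_pos rfl] at this; omega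
      · rw [if_neg hkj] at this; omega
  · rw [key]
    exact hS (mulSq p m) i j hij (by rw [← key]; exact hjsq) hiM
end
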